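/- Let Ω ⊂ ℝ² be the cuspidal domain {(x,y) : 0 < x < 1, 0 < |y| < x^{1/α}} with 1/2 < α ≤ 1, d = dist to ∂Ω, and 1 ≤ r < 2/(3−2α). If p ∈ L²(Ω, 1−α) (i.e., p·d^{1−α} ∈ L²(Ω)), then p ∈ L^r(Ω) and ‖p‖_{L^r(Ω)} ≤ C‖p·d^{1−α}‖_{L²(Ω)} with C depending only on α and r. -/

import Mathlib

open MeasureTheory

/-- The planar cuspidal domain `Ω = {(x,y) : 0 < x < 1, 0 < |y| < x^{1/α}}`. -/
def cuspDomain (α : ℝ) : Set (ℝ × ℝ) :=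
  {q : ℝ × ℝ | 0 < q.1 ∧ q.1 < 1 ∧ 0 < |q.2| ∧ |q.2| < q.1 ^ (1 / α)}

/-!
Write `p = d^{α-1} · (p d^{1-α})`. By Hölder with `1/r = 1/s + 1/2`, `s = 2r/(2-r)`, it suffices
that `d^{α-1} ∈ L^s(Ω)`, i.e. `∫_Ω d^β < ∞` for `β = (α-1)s ∈ (-1, 0]`.
For `q = (x, y) ∈ Ω` let `M = min(|y|, x^{1/α} - |y|, 1 - x)`. Since `t ↦ t^{1/α}` is
`2`-Lipschitz on `[0, 1]`, the ball of radius `M/3` about `q` stays in `Ω`, so `d ≥ M/3` and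
`d^β ≤ 3^{-β} (|y|^β + (x^{1/α} - |y|)^β + (1 - x)^β)`. On each fibre `|y| < x^{1/α} ≤ 1` the
three terms have integrals bounded by `2/(β+1)`, `2/(β+1)` and `2(1-x)^β`, which Tonelli turns
into a finite integral over `Ω`.
-/

open Set Metric
open scoped ENNReal

lemma setLIntegral_Ioo_zero_rpow_le {β c : ℝ} (hβ : -1 < β) (hc₀ : 0 ≤ c) (hc₁ : c ≤ 1) :
    ∫⁻ y in Ioo 0 c, ENNReal.ofReal (y ^ β) ≤ ENNReal.ofReal (1 / (β + 1)) := by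
  have hint : IntegrableOn (fun y : ℝ => y ^ β) (Ioo 0 c) :=
    (intervalIntegrable_iff_integrableOn_Ioo_of_le hc₀).1
      (intervalIntegral.intervalIntegrable_rpow' hβ)
  rw [← ofReal_integral_eq_lintegral_ofReal hint
    ((ae_restrict_mem measurableSet_Ioo).mono fun y hy => Real.rpow_nonneg hy.1.le β),
    ← integral_Ioc_eq_integral_Ioo, ← intervalIntegral.integral_of_le hc₀,
    integral_rpow (.inl hβ), Real.zero_rpow (by linarith), sub_zero]
  exact ENNReal.ofReal_le_ofReal <|
    div_le_div_of_nonneg_right (Real.rpow_le_one hc₀ hc₁ (by linarith)) (by linarith)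

lemma setLIntegral_Ioo_comp_sub_left (h : ℝ → ℝ≥0∞) (c : ℝ) :
    ∫⁻ y in Ioo 0 c, h (c - y) = ∫⁻ y in Ioo 0 c, h y := by
  have hpre : Ioo 0 c = (c - ·) ⁻¹' Ioo 0 c := by
    ext y; simp only [mem_Ioo, mem_preimage, sub_pos, sub_lt_self_iff, and_comm]
  conv_lhs => rw [hpre]
  exact (Measure.measurePreserving_sub_left volume c).setLIntegral_comp_preimage_emb
    (MeasurableEquiv.subLeft c).measurableEmbedding h _

lemma setLIntegral_Ioo_comp_abs_le (h : ℝ → ℝ≥0∞) (c : ℝ) :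
    ∫⁻ y in Ioo (-c) c, h |y| ≤ 2 * ∫⁻ y in Ioo 0 c, h y := by
  have hneg : ∫⁻ y in Ioc (-c) 0, h |y| = ∫⁻ y in Ioo 0 c, h y := by
    have hpre : Ioo (-c) 0 = Neg.neg ⁻¹' Ioo 0 c := by
      ext y; simp only [mem_Ioo, mem_preimage, Left.neg_pos_iff, neg_lt, and_comm]
    calc ∫⁻ y in Ioc (-c) 0, h |y| = ∫⁻ y in Neg.neg ⁻¹' Ioo 0 c, h |-y| := by
          rw [← hpre, setLIntegral_congr Ioo_ae_eq_Ioc.symm]; simp only [abs_neg]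
      _ = ∫⁻ y in Ioo 0 c, h |y| :=
          (Measure.measurePreserving_neg volume).setLIntegral_comp_preimage_emb
            (MeasurableEquiv.neg ℝ).measurableEmbedding (fun t => h |t|) _
      _ = ∫⁻ y in Ioo 0 c, h y :=
          setLIntegral_congr_fun measurableSet_Ioo fun y hy => by rw [abs_of_pos hy.1]
  have hpos : ∫⁻ y in Ioo 0 c, h |y| = ∫⁻ y in Ioo 0 c, h y :=
    setLIntegral_congr_fun measurableSet_Ioo fun y hy => by rw [abs_of_pos hy.1]
  calc ∫⁻ y in Ioo (-c) c, h |y| ≤ ∫⁻ y in Ioc (-c) 0 ∪ Ioo 0 c, h |y| :=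
        lintegral_mono_set fun y hy =>
          (le_or_gt y 0).imp (fun hy0 => ⟨hy.1, hy0⟩) fun hy0 => ⟨hy0, hy.2⟩
    _ ≤ (∫⁻ y in Ioc (-c) 0, h |y|) + ∫⁻ y in Ioo 0 c, h |y| := lintegral_union_le _ _ _
    _ = 2 * ∫⁻ y in Ioo 0 c, h y := by rw [hneg, hpos, two_mul]

lemma setLIntegral_regionBetween {X : Type*} [MeasurableSpace X] {μ : Measure X} [SFinite μ]
    {f g : X → ℝ} {s : Set X} (hf : Measurable f) (hg : Measurable g) (hs : MeasurableSet s)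
    {H : X × ℝ → ℝ≥0∞} (hH : Measurable H) :
    ∫⁻ q in regionBetween f g s, H q ∂μ.prod volume =
      ∫⁻ x in s, (∫⁻ y in Ioo (f x) (g x), H (x, y)) ∂μ := by
  have hR := measurableSet_regionBetween hf hg hs
  rw [← lintegral_indicator hR, lintegral_prod _ (hH.indicator hR).aemeasurable,
    ← lintegral_indicator hs]
  congr 1; funext x
  by_cases hx : x ∈ s
  · rw [indicator_of_mem hx, ← lintegral_indicator measurableSet_Ioo]
    congr 1; funext y
    simp only [indicator, regionBetween, mem_ofPred_eq, hx, true_and]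
  · simp [indicator, regionBetween, hx]

lemma rpow_sub_rpow_le_mul_sub {p a b : ℝ} (hp : 1 ≤ p) (ha : 0 ≤ a) (hab : a ≤ b) (hb : b ≤ 1) :
    b ^ p - a ^ p ≤ p * (b - a) := by
  have hdiff := Real.differentiable_rpow_const hp
  refine (convex_Icc 0 1).image_sub_le_mul_sub_of_deriv_le hdiff.continuous.continuousOn
    hdiff.differentiableOn (fun t ht => ?_) a ⟨ha, hab.trans hb⟩ b ⟨ha.trans hab, hb⟩ hab
  rw [interior_Icc] at ht
  have : t ^ (p - 1) ≤ 1 := Real.rpow_le_one ht.1.le ht.2.le (by linarith)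
  rw [Real.deriv_rpow_const]
  nlinarith

lemma rpow_min_min_le_add_add {a b c β : ℝ} (ha : 0 ≤ a) (hb : 0 ≤ b) (hc : 0 ≤ c) :
    min (min a b) c ^ β ≤ a ^ β + b ^ β + c ^ β := by
  have := Real.rpow_nonneg ha β
  have := Real.rpow_nonneg hb β
  have := Real.rpow_nonneg hc β
  rcases min_choice (min a b) c with h | h <;> rw [h]
  · rcases min_choice a b with h' | h' <;> rw [h'] <;> linarith
  · linarith

lemma le_infDist_frontier_of_ball_subset {X : Type*} [PseudoMetricSpace X] {s : Set X} {x : X}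
    {r : ℝ} (hs : (frontier s).Nonempty) (h : ball x r ⊆ s) : r ≤ infDist x (frontier s) :=
  (le_infDist hs).2 fun _ hy => not_lt.1 fun hxy =>
    hy.2 (interior_maximal h isOpen_ball (mem_ball'.2 hxy))

lemma memLp_rpow_of_lintegral_rpow_mul_lt_top {X : Type*} [MeasurableSpace X] {μ : Measure X}
    {h : X → ℝ} (hm : Measurable h) (h₀ : ∀ x, 0 ≤ h x) {a s : ℝ} (hs : 0 < s)
    (hfin : ∫⁻ x, ENNReal.ofReal (h x ^ (a * s)) ∂μ < ∞) :
    MemLp (fun x => h x ^ a) (ENNReal.ofReal s) μ := by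
  refine ⟨(hm.pow_const a).aestronglyMeasurable, ?_⟩
  rw [eLpNorm_lt_top_iff_lintegral_rpow_enorm_lt_top (by simpa using hs) ENNReal.ofReal_ne_top,
    ENNReal.toReal_ofReal hs.le]
  convert hfin using 3 with x
  rw [Real.enorm_eq_ofReal (Real.rpow_nonneg (h₀ x) a),
    ENNReal.ofReal_rpow_of_nonneg (Real.rpow_nonneg (h₀ x) a) hs.le, ← Real.rpow_mul (h₀ x)]

lemma holderTriple_ofReal_two {r : ℝ} (hr₀ : 0 < r) (hr₂ : r < 2) :
    ENNReal.HolderTriple (ENNReal.ofReal (2 * r / (2 - r))) 2 (ENNReal.ofReal r) := by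
  have hs : 0 < 2 * r / (2 - r) := div_pos (by linarith) (by linarith)
  refine .of_toReal ⟨?_, ?_, ?_⟩ <;>
    simp only [ENNReal.toReal_ofReal hs.le, ENNReal.toReal_ofReal hr₀.le, ENNReal.toReal_ofNat]
  · field_simp; ring
  · exact hs
  · exact two_pos

lemma measurableSet_cuspDomain (α : ℝ) : MeasurableSet (cuspDomain α) :=
  (measurableSet_lt measurable_const measurable_fst).inter <|
    (measurableSet_lt measurable_fst measurable_const).inter <|
      (measurableSet_lt measurable_const measurable_snd.abs).inter <|
        measurableSet_lt measurable_snd.abs (measurable_fst.pow_const _)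

lemma cuspDomain_subset_regionBetween (α : ℝ) :
    cuspDomain α ⊆ regionBetween (fun x => -x ^ (1 / α)) (fun x => x ^ (1 / α)) (Ioo 0 1) :=
  fun _ ⟨hx₀, hx₁, _, hy⟩ => ⟨⟨hx₀, hx₁⟩, abs_lt.1 hy⟩

lemma frontier_cuspDomain_nonempty (α : ℝ) : (frontier (cuspDomain α)).Nonempty := by
  refine nonempty_frontier_iff.2 ⟨⟨(1 / 2, (1 / 2 : ℝ) ^ (1 / α) / 2), ?_⟩, fun h => ?_⟩
  · have : 0 < (1 / 2 : ℝ) ^ (1 / α) := by positivity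
    refine ⟨by norm_num, by norm_num, ?_, ?_⟩ <;> rw [abs_of_pos (by positivity)] <;> linarith
  · exact lt_irrefl _ (h.symm ▸ mem_univ ((0 : ℝ), (0 : ℝ))).1

noncomputable def cuspBoundaryGap (α : ℝ) (q : ℝ × ℝ) : ℝ :=
  min (min |q.2| (q.1 ^ (1 / α) - |q.2|)) (1 - q.1)

lemma cuspBoundaryGap_pos {α : ℝ} {q : ℝ × ℝ} (hq : q ∈ cuspDomain α) :
    0 < cuspBoundaryGap α q :=
  lt_min (lt_min hq.2.2.1 (sub_pos.2 hq.2.2.2)) (sub_pos.2 hq.2.1)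

lemma ball_subset_cuspDomain {α : ℝ} (hα : 1 / 2 ≤ α) (hα₁ : α ≤ 1) {q : ℝ × ℝ}
    (hq : q ∈ cuspDomain α) : ball q (cuspBoundaryGap α q / 3) ⊆ cuspDomain α := by
  have hM := cuspBoundaryGap_pos hq
  obtain ⟨hx₀, hx₁, -, -⟩ := hq
  have hM₁ : cuspBoundaryGap α q ≤ |q.2| := (min_le_left _ _).trans (min_le_left _ _)
  have hM₂ : cuspBoundaryGap α q ≤ q.1 ^ (1 / α) - |q.2| :=
    (min_le_left _ _).trans (min_le_right _ _)
  have hM₃ : cuspBoundaryGap α q ≤ 1 - q.1 := min_le_right _ _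
  set ρ := cuspBoundaryGap α q / 3 with hρ
  have hp₁ : 1 ≤ 1 / α := by rw [le_div_iff₀ (by linarith)]; linarith
  have hp₂ : 1 / α * ρ ≤ 2 * ρ := by
    gcongr; rw [div_le_iff₀ (by linarith)]; linarith
  have hcx : q.1 ^ (1 / α) ≤ q.1 := Real.rpow_le_self_of_le_one hx₀.le hx₁.le hp₁
  intro p hp
  rw [mem_ball, Prod.dist_eq, max_lt_iff, Real.dist_eq, Real.dist_eq, abs_lt] at hp
  obtain ⟨⟨hu₁, hu₂⟩, hv⟩ := hp
  have hv₁ : |p.2| < |q.2| + ρ := by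
    have := abs_sub_abs_le_abs_sub p.2 q.2; linarith
  have hv₂ : |q.2| - ρ < |p.2| := by
    have := abs_sub_abs_le_abs_sub q.2 p.2; rw [abs_sub_comm] at this; linarith
  have hlip := rpow_sub_rpow_le_mul_sub hp₁ (by linarith) (by linarith : q.1 - ρ ≤ q.1) hx₁.le
  have hmono : (q.1 - ρ) ^ (1 / α) ≤ p.1 ^ (1 / α) :=
    Real.rpow_le_rpow (by linarith) (by linarith) (by linarith)
  exact ⟨by linarith, by linarith, by linarith, by linarith⟩

lemma cuspBoundaryGap_div_three_le_infDist {α : ℝ} (hα : 1 / 2 ≤ α) (hα₁ : α ≤ 1) {q : ℝ × ℝ}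
    (hq : q ∈ cuspDomain α) : cuspBoundaryGap α q / 3 ≤ infDist q (frontier (cuspDomain α)) :=
  le_infDist_frontier_of_ball_subset (frontier_cuspDomain_nonempty α)
    (ball_subset_cuspDomain hα hα₁ hq)

lemma infDist_frontier_cuspDomain_pos {α : ℝ} (hα : 1 / 2 ≤ α) (hα₁ : α ≤ 1) {q : ℝ × ℝ}
    (hq : q ∈ cuspDomain α) : 0 < infDist q (frontier (cuspDomain α)) :=
  (div_pos (cuspBoundaryGap_pos hq) three_pos).trans_le
    (cuspBoundaryGap_div_three_le_infDist hα hα₁ hq)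

noncomputable def cuspMajorant (α β : ℝ) (q : ℝ × ℝ) : ℝ≥0∞ :=
  ENNReal.ofReal (|q.2| ^ β) + ENNReal.ofReal ((q.1 ^ (1 / α) - |q.2|) ^ β) +
    ENNReal.ofReal ((1 - q.1) ^ β)

lemma measurable_cuspMajorant (α β : ℝ) : Measurable (cuspMajorant α β) := by
  unfold cuspMajorant; fun_prop

lemma infDist_frontier_cuspDomain_rpow_le {α β : ℝ} (hα : 1 / 2 ≤ α) (hα₁ : α ≤ 1) (hβ : β ≤ 0)
    {q : ℝ × ℝ} (hq : q ∈ cuspDomain α) :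
    ENNReal.ofReal (infDist q (frontier (cuspDomain α)) ^ β) ≤
      ENNReal.ofReal (3 ^ (-β)) * cuspMajorant α β q := by
  have hM := cuspBoundaryGap_pos hq
  calc ENNReal.ofReal (infDist q (frontier (cuspDomain α)) ^ β)
      ≤ ENNReal.ofReal ((cuspBoundaryGap α q / 3) ^ β) :=
        ENNReal.ofReal_le_ofReal (Real.rpow_le_rpow_of_nonpos (by positivity)
          (cuspBoundaryGap_div_three_le_infDist hα hα₁ hq) hβ)
    _ = ENNReal.ofReal (3 ^ (-β)) * ENNReal.ofReal (cuspBoundaryGap α q ^ β) := by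
        rw [← ENNReal.ofReal_mul (by positivity), Real.div_rpow hM.le zero_le_three,
          Real.rpow_neg zero_le_three, div_eq_inv_mul]
    _ ≤ ENNReal.ofReal (3 ^ (-β)) * cuspMajorant α β q := by
        gcongr
        obtain ⟨-, hx₁, -, hy⟩ := hq
        refine (ENNReal.ofReal_le_ofReal (rpow_min_min_le_add_add (abs_nonneg _)
          (sub_nonneg.2 hy.le) (sub_nonneg.2 hx₁.le))).trans ?_
        exact ENNReal.ofReal_add_le.trans (add_le_add_left ENNReal.ofReal_add_le _)

lemma setLIntegral_Ioo_cuspMajorant_le {α β : ℝ} (hα : 0 ≤ α) (hβ : -1 < β) {x : ℝ}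
    (hx : x ∈ Ioo 0 1) :
    ∫⁻ y in Ioo (-x ^ (1 / α)) (x ^ (1 / α)), cuspMajorant α β (x, y) ≤
      2 * (2 * ENNReal.ofReal (1 / (β + 1)) + ENNReal.ofReal ((1 - x) ^ β)) := by
  set c := x ^ (1 / α)
  have hc₀ : 0 ≤ c := Real.rpow_nonneg hx.1.le _
  have hc₁ : c ≤ 1 := Real.rpow_le_one hx.1.le hx.2.le (by positivity)
  have hK := setLIntegral_Ioo_zero_rpow_le hβ hc₀ hc₁
  refine (setLIntegral_Ioo_comp_abs_le (fun t => ENNReal.ofReal (t ^ β) +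
    ENNReal.ofReal ((c - t) ^ β) + ENNReal.ofReal ((1 - x) ^ β)) c).trans ?_
  rw [lintegral_add_right _ measurable_const, lintegral_add_left (by fun_prop),
    setLIntegral_Ioo_comp_sub_left (fun t => ENNReal.ofReal (t ^ β)), setLIntegral_const,
    Real.volume_Ioo, sub_zero, two_mul (ENNReal.ofReal _)]
  gcongr
  exact mul_le_of_le_one_right' (ENNReal.ofReal_le_one.2 hc₁)

lemma setLIntegral_cuspMajorant_lt_top {α β : ℝ} (hα : 0 ≤ α) (hβ : -1 < β) :
    ∫⁻ q in cuspDomain α, cuspMajorant α β q < ∞ := by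
  set K := ENNReal.ofReal (1 / (β + 1))
  calc ∫⁻ q in cuspDomain α, cuspMajorant α β q
      ≤ ∫⁻ q in regionBetween (fun x => -x ^ (1 / α)) (fun x => x ^ (1 / α)) (Ioo 0 1),
          cuspMajorant α β q :=
        lintegral_mono_set (cuspDomain_subset_regionBetween α)
    _ = ∫⁻ x in Ioo 0 1, ∫⁻ y in Ioo (-x ^ (1 / α)) (x ^ (1 / α)), cuspMajorant α β (x, y) := by
        rw [Measure.volume_eq_prod]
        exact setLIntegral_regionBetween (by fun_prop) (by fun_prop) measurableSet_Ioo
          (measurable_cuspMajorant α β)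
    _ ≤ ∫⁻ x in Ioo 0 1, 2 * (2 * K + ENNReal.ofReal ((1 - x) ^ β)) :=
        setLIntegral_mono (by fun_prop) fun x hx => setLIntegral_Ioo_cuspMajorant_le hα hβ hx
    _ = 2 * (2 * K + ∫⁻ x in Ioo 0 1, ENNReal.ofReal (x ^ β)) := by
        rw [lintegral_const_mul _ (by fun_prop), lintegral_add_left measurable_const,
          setLIntegral_const, Real.volume_Ioo, sub_zero, ENNReal.ofReal_one, mul_one,
          setLIntegral_Ioo_comp_sub_left (fun t => ENNReal.ofReal (t ^ β))]
    _ ≤ 2 * (2 * K + K) := by gcongr; exact setLIntegral_Ioo_zero_rpow_le hβ zero_le_one le_rfl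
    _ < ∞ := by finiteness

lemma lintegral_infDist_frontier_cuspDomain_rpow_lt_top {α β : ℝ} (hα : 1 / 2 ≤ α) (hα₁ : α ≤ 1)
    (hβ : -1 < β) (hβ₀ : β ≤ 0) :
    ∫⁻ q in cuspDomain α, ENNReal.ofReal (infDist q (frontier (cuspDomain α)) ^ β) < ∞ :=
  calc ∫⁻ q in cuspDomain α, ENNReal.ofReal (infDist q (frontier (cuspDomain α)) ^ β)
      ≤ ∫⁻ q in cuspDomain α, ENNReal.ofReal (3 ^ (-β)) * cuspMajorant α β q :=
        setLIntegral_mono ((measurable_cuspMajorant α β).const_mul _) fun _ hq =>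
          infDist_frontier_cuspDomain_rpow_le hα hα₁ hβ₀ hq
    _ = ENNReal.ofReal (3 ^ (-β)) * ∫⁻ q in cuspDomain α, cuspMajorant α β q :=
        lintegral_const_mul _ (measurable_cuspMajorant α β)
    _ < ∞ := ENNReal.mul_lt_top ENNReal.ofReal_lt_top
        (setLIntegral_cuspMajorant_lt_top (by linarith) hβ)

/-- On the cusp domain with `1/2 < α ≤ 1`, if `p·d^{1−α} ∈ L²(Ω)` and
`1 ≤ r < 2/(3−2α)`, then `p ∈ L^r(Ω)` with
`‖p‖_{L^r(Ω)} ≤ C ‖p·d^{1−α}‖_{L²(Ω)}`, `C` depending only on `α` and `r`. -/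
theorem pressure_Lr_estimate_cusp (α r : ℝ) (hα : 1 / 2 < α) (hα1 : α ≤ 1)
    (hr1 : 1 ≤ r) (hr2 : r < 2 / (3 - 2 * α))
    (d : ℝ × ℝ → ℝ) (hd : ∀ q, d q = Metric.infDist q (frontier (cuspDomain α))) :
    ∃ C : ℝ, 0 < C ∧ ∀ f : ℝ × ℝ → ℝ,
      MemLp (fun q => f q * d q ^ (1 - α)) 2 (volume.restrict (cuspDomain α)) →
      MemLp f (ENNReal.ofReal r) (volume.restrict (cuspDomain α)) ∧
      eLpNorm f (ENNReal.ofReal r) (volume.restrict (cuspDomain α)) ≤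
        ENNReal.ofReal C *
          eLpNorm (fun q => f q * d q ^ (1 - α)) 2 (volume.restrict (cuspDomain α)) := by
  obtain rfl : d = fun q => infDist q (frontier (cuspDomain α)) := funext hd
  set μ := volume.restrict (cuspDomain α)
  have hr₀ : 0 < r := by linarith
  have hr₂ : r < 2 := hr2.trans_le (div_le_self zero_le_two (by linarith))
  set s := 2 * r / (2 - r)
  have hs : 0 < s := div_pos (by linarith) (by linarith)
  have hβ : -1 < (α - 1) * s := by
    rw [lt_div_iff₀ (by linarith)] at hr2
    rw [← mul_div_assoc, lt_div_iff₀ (by linarith)]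
    nlinarith
  have := holderTriple_ofReal_two hr₀ hr₂
  set w := fun q => infDist q (frontier (cuspDomain α)) ^ (α - 1)
  have hw : MemLp w (ENNReal.ofReal s) μ :=
    memLp_rpow_of_lintegral_rpow_mul_lt_top (continuous_infDist_pt _).measurable
      (fun _ => infDist_nonneg) hs (lintegral_infDist_frontier_cuspDomain_rpow_lt_top hα.le hα1
        hβ (mul_nonpos_of_nonpos_of_nonneg (by linarith) hs.le))
  refine ⟨(eLpNorm w (ENNReal.ofReal s) μ).toReal + 1, by positivity, fun f hf => ?_⟩
  have hfw : f =ᵐ[μ] w * fun q => f q * infDist q (frontier (cuspDomain α)) ^ (1 - α) := by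
    filter_upwards [ae_restrict_mem (measurableSet_cuspDomain α)] with q hq
    rw [Pi.mul_apply, mul_left_comm, ← Real.rpow_add (infDist_frontier_cuspDomain_pos hα.le hα1 hq)]
    simp
  refine ⟨(hf.mul hw).ae_eq hfw.symm, (eLpNorm_congr_ae hfw).trans_le
    ((eLpNorm_smul_le_mul_eLpNorm (p := ENNReal.ofReal s) (q := 2) hf.1 hw.1).trans ?_)⟩
  gcongr
  exact (ENNReal.le_ofReal_iff_toReal_le hw.eLpNorm_ne_top (by positivity)).2 (by linarith)
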